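/- arXiv:0710.0432 — 6 statements merged into one kernel-verified Lean document; each statement's English description precedes it below -/
import Mathlib

section
/- (Algebraic Birkhoff Decomposition) Let H be a commutative connected filtered Hopf algebra over a commutative ring k and let (R,P) be a commutative Rota–Baxter k-algebra of weight −1. Let φ: H → R be a k-algebra homomorphism. Define k-linear maps φ₋, φ₊ : H → R by φ₋(1)=1, φ₊(1)=1 and, recursively on the filtration, for x ∈ ker ε with reduced coproduct Δ(x) − x⊗1 − 1⊗x = Σ x′⊗x″: φ₋(x) = −P(φ(x) + Σ φ₋(x′)φ(x″)) and φ₊(x) = (id−P)(φ(x) + Σ φ₋(x′)φ(x″)). Then φ₋ and φ₊ are k-algebra homomorphisms, φ₋(H) ⊆ k·1 + P(R), φ₊(H) ⊆ k·1 + (id−P)(R), and φ₋ ⋆ φ = φ₊ in the convolution algebra Hom_k(H,R); equivalently φ = φ₋^{⋆(−1)} ⋆ φ₊, where φ₋^{⋆(−1)} is the convolution inverse of φ₋. -/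
open TensorProduct

/-- The convolution product on `Hom_k(H, R)` for a `k`-coalgebra `H` and a
commutative `k`-algebra `R`: `(f ⋆ g)(x) = Σ f(x₍₁₎) g(x₍₂₎)`. -/
noncomputable def convolution {k H R : Type*} [CommRing k] [AddCommGroup H] [Module k H]
    [CoalgebraStruct k H] [CommRing R] [Algebra k R] (f g : H →ₗ[k] R) : H →ₗ[k] R :=
  LinearMap.mul' k R ∘ₗ TensorProduct.map f g ∘ₗ Coalgebra.comul

/-!
Put `ψ = φ₋ ⋆ φ`. As `φ₋(1) = φ(1) = 1`, the bracket in both recursions is `ψ - φ₋`, so on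
`ker ε` they say `φ₋ = -P (ψ - φ₋)` and `φ₊ = (ψ - φ₋) + φ₋ = ψ`.

Multiplicativity of `φ₋` is proved by induction on the sum of the filtration degrees. In
`Δx = x ⊗ 1 + (Δx - x ⊗ 1)` the second summand has left tensor factors of lower degree, so the
only term of `ψ(xy)` not covered by the induction hypothesis is `φ₋(xy)`; this gives
`ψ(xy) - φ₋(xy) = ψ(x)ψ(y) - φ₋(x)φ₋(y)`. For `x, y ∈ ker ε` the Rota–Baxter identity of
weight `-1` turns `φ₋(x)φ₋(y) = P(ψx - φ₋x) P(ψy - φ₋y)` into `-P` of the right-hand side, which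
by the recursion is `φ₋(xy)`.

Then `φ₊ = φ₋ ⋆ φ` is a convolution of algebra maps, hence multiplicative, and `φ₋ ∘ S` is the
convolution inverse of `φ₋`.
-/

open WithConv

section Convolution

variable {k H R : Type*} [CommRing k] [CommRing R] [Algebra k R]

lemma convolution_eq_convMul [AddCommGroup H] [Module k H] [CoalgebraStruct k H]
    (f g : H →ₗ[k] R) : convolution f g = (toConv f * toConv g).ofConv := rfl

lemma convolution_cancel_left [AddCommGroup H] [Module k H] [Coalgebra k H] {f g : H →ₗ[k] R}
    (h : convolution g f = Algebra.linearMap k R ∘ₗ Coalgebra.counit) (e : H →ₗ[k] R) :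
    convolution g (convolution f e) = e := by
  have h1 : toConv g * toConv f = 1 := congrArg toConv h
  rw [convolution_eq_convMul, convolution_eq_convMul, toConv_ofConv, ← mul_assoc, h1, one_mul]

lemma convolution_apply_eq_add_add [Ring H] [Module k H] [CoalgebraStruct k H] {f g : H →ₗ[k] R}
    (hf : f 1 = 1) (hg : g 1 = 1) (x : H) :
    convolution f g x = f x + g x +
      LinearMap.mul' k R (TensorProduct.map f g
        (Coalgebra.comul (R := k) x - x ⊗ₜ[k] 1 - 1 ⊗ₜ[k] x)) := by
  simp [convolution, hf, hg]

lemma AlgHom.map_mul_convolution [Ring H] [Bialgebra k H] (f g : H →ₐ[k] R) (x y : H) :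
    convolution f.toLinearMap g.toLinearMap (x * y) =
      convolution f.toLinearMap g.toLinearMap x * convolution f.toLinearMap g.toLinearMap y :=
  map_mul (toConv f * toConv g).ofConv x y

lemma AlgHom.toLinearMap_comp_convOne [Ring H] [Algebra k H] [Coalgebra k H] (f : H →ₐ[k] R) :
    f.toLinearMap ∘ₗ (1 : WithConv (H →ₗ[k] H)).ofConv =
      Algebra.linearMap k R ∘ₗ Coalgebra.counit := by
  ext; simp

lemma AlgHom.convolution_comp_antipode_self [Ring H] [HopfAlgebra k H] (f : H →ₐ[k] R) :
    convolution (f.toLinearMap ∘ₗ HopfAlgebra.antipode k) f.toLinearMap =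
      Algebra.linearMap k R ∘ₗ Coalgebra.counit := by
  rw [← f.toLinearMap_comp_convOne, ← LinearMap.antipode_mul_id,
    LinearMap.algHom_comp_convMul_distrib]
  rfl

lemma AlgHom.convolution_self_comp_antipode [Ring H] [HopfAlgebra k H] (f : H →ₐ[k] R) :
    convolution f.toLinearMap (f.toLinearMap ∘ₗ HopfAlgebra.antipode k) =
      Algebra.linearMap k R ∘ₗ Coalgebra.counit := by
  rw [← f.toLinearMap_comp_convOne, ← LinearMap.id_mul_antipode,
    LinearMap.algHom_comp_convMul_distrib]
  rfl

end Convolution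

section Counit

variable {k H : Type*} [CommRing k] [Ring H] [Bialgebra k H]

lemma counit_sub_counit_smul_one (x : H) :
    Coalgebra.counit (R := k) (x - Coalgebra.counit (R := k) x • 1) = 0 := by
  simp [Bialgebra.counit_one]

lemma LinearMap.ext_of_map_one_of_counit_eq_zero {M : Type*} [AddCommGroup M] [Module k M]
    {f g : H →ₗ[k] M} (h1 : f 1 = g 1)
    (h : ∀ x : H, Coalgebra.counit (R := k) x = 0 → f x = g x) : f = g := by
  ext x
  have hx : x = Coalgebra.counit (R := k) x • 1 + (x - Coalgebra.counit (R := k) x • 1) := by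
    abel
  rw [hx, map_add, map_add, map_smul, map_smul, h1, h _ (counit_sub_counit_smul_one x)]

variable {R : Type*} [CommRing R] [Algebra k R]

lemma map_mem_one_sup_of_counit_eq_zero {f : H →ₗ[k] R} (hf : f 1 = 1) {M : Submodule k R}
    (h : ∀ x : H, Coalgebra.counit (R := k) x = 0 → f x ∈ M) (x : H) : f x ∈ 1 ⊔ M := by
  have hx : x = Coalgebra.counit (R := k) x • 1 + (x - Coalgebra.counit (R := k) x • 1) := by
    abel
  rw [hx, map_add, map_smul, hf]
  have hone : (1 : R) ∈ (1 : Submodule k R) := Submodule.one_le.mp le_rfl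
  exact Submodule.add_mem_sup (Submodule.smul_mem _ _ hone) (h _ (counit_sub_counit_smul_one x))

lemma map_mul_of_map_mul_sub_counit_smul_one {f : H →ₗ[k] R} (hf : f 1 = 1) {x y : H}
    (h : f ((x - Coalgebra.counit (R := k) x • 1) * (y - Coalgebra.counit (R := k) y • 1)) =
      f (x - Coalgebra.counit (R := k) x • 1) * f (y - Coalgebra.counit (R := k) y • 1)) :
    f (x * y) = f x * f y := by
  set a := Coalgebra.counit (R := k) x
  set b := Coalgebra.counit (R := k) y
  have hxy : x * y =
      (x - a • 1) * (y - b • 1) + a • (y - b • 1) + b • (x - a • 1) + (a * b) • 1 := by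
    simp only [mul_sub, sub_mul, smul_mul_assoc, mul_smul_comm, one_mul, mul_one, smul_smul,
      smul_sub]
    abel
  rw [hxy, map_add, map_add, map_add, h, map_smul, map_smul, map_smul, hf]
  have hx : f x = a • 1 + f (x - a • 1) := by
    rw [← hf, ← map_smul, ← map_add, add_sub_cancel]
  have hy : f y = b • 1 + f (y - b • 1) := by
    rw [← hf, ← map_smul, ← map_add, add_sub_cancel]
  rw [hx, hy]
  simp only [Algebra.smul_def, mul_one, map_mul]
  ring

end Counit

section RotaBaxter

variable {k R : Type*} [CommRing k] [Ring R] [Module k R]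

lemma mul_eq_neg_map_of_rotaBaxter {P : R →ₗ[k] R}
    (hP : ∀ x y : R, P x * P y = P (x * P y) + P (P x * y) - P (x * y)) {a b x y : R}
    (hx : x = -P a) (hy : y = -P b) : x * y = -P ((a + x) * (b + y) - x * y) := by
  subst hx hy
  have h : (a + -P a) * (b + -P b) - -P a * -P b = a * b - a * P b - P a * b := by noncomm_ring
  rw [h, neg_mul_neg, hP, map_sub, map_sub]
  abel

end RotaBaxter

section Scalars

variable {k H R : Type*} [CommRing k] [Ring H] [Algebra k H] [Ring R] [Algebra k R]
  {f : H →ₗ[k] R}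

lemma map_algebraMap_of_map_one (hf : f 1 = 1) (c : k) :
    f (algebraMap k H c) = algebraMap k R c := by
  rw [Algebra.algebraMap_eq_smul_one, map_smul, hf, Algebra.algebraMap_eq_smul_one]

lemma map_algebraMap_mul (hf : f 1 = 1) (c : k) (y : H) :
    f (algebraMap k H c * y) = f (algebraMap k H c) * f y := by
  rw [← Algebra.smul_def, map_smul, map_algebraMap_of_map_one hf, Algebra.smul_def]

lemma map_mul_algebraMap (hf : f 1 = 1) (x : H) (c : k) :
    f (x * algebraMap k H c) = f x * f (algebraMap k H c) := by
  rw [← Algebra.commutes, map_algebraMap_mul hf, map_algebraMap_of_map_one hf, Algebra.commutes]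

end Scalars

section TensorProduct

variable {k H R : Type*} [CommRing k] [Ring H] [CommRing R] [Algebra k R]

lemma mul'_map_mul_of_mem_range_rTensor [Algebra k H] {f : H →ₗ[k] R} (g : H →ₐ[k] R)
    {A B : Submodule k H} (hAB : ∀ a ∈ A, ∀ b ∈ B, f (a * b) = f a * f b) {s t : H ⊗[k] H}
    (hs : s ∈ LinearMap.range (A.subtype.rTensor H))
    (ht : t ∈ LinearMap.range (B.subtype.rTensor H)) :
    LinearMap.mul' k R (TensorProduct.map f g.toLinearMap (s * t)) =
      LinearMap.mul' k R (TensorProduct.map f g.toLinearMap s) *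
        LinearMap.mul' k R (TensorProduct.map f g.toLinearMap t) := by
  obtain ⟨s, rfl⟩ := hs
  obtain ⟨t, rfl⟩ := ht
  induction s using TensorProduct.induction_on with
  | zero => simp
  | add s₁ s₂ h₁ h₂ => simp only [map_add, add_mul, h₁, h₂]
  | tmul a b =>
    induction t using TensorProduct.induction_on with
    | zero => simp
    | add t₁ t₂ h₁ h₂ => simp only [map_add, mul_add, h₁, h₂]
    | tmul c d =>
      simp only [LinearMap.rTensor_tmul, Submodule.subtype_apply,
        Algebra.TensorProduct.tmul_mul_tmul, TensorProduct.map_tmul, LinearMap.mul'_apply,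
        hAB a a.2 c c.2]
      simp only [AlgHom.toLinearMap_apply, map_mul]
      ring

end TensorProduct

section Filtration

variable {k H R : Type*} [CommRing k] [Ring H] [Bialgebra k H] [CommRing R] [Algebra k R]
  {F : ℕ → Submodule k H} (hF_mono : Monotone F)
  (hF_comul : ∀ n : ℕ, ∀ x ∈ F n, Coalgebra.comul (R := k) x ∈
    ⨆ (p : ℕ) (q : ℕ) (_ : p + q = n),
      LinearMap.range (TensorProduct.map (F p).subtype (F q).subtype))
  (hF_conn : F 0 = (1 : Submodule k H))
include hF_mono hF_comul hF_conn

lemma comul_sub_tmul_one_mem_range_rTensor {n : ℕ} {x : H} (hx : x ∈ F (n + 1)) :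
    Coalgebra.comul (R := k) x - x ⊗ₜ[k] 1 ∈
      LinearMap.range ((F n).subtype.rTensor H) := by
  -- `id ⊗ π` sends `Δx` to `Δx - x ⊗ 1` and kills the component in `F (n + 1) ⊗ F 0`.
  set π : H →ₗ[k] H := LinearMap.id - Algebra.linearMap k H ∘ₗ Coalgebra.counit
  have hπ : π.lTensor H (Coalgebra.comul (R := k) x) =
      Coalgebra.comul (R := k) x - x ⊗ₜ[k] 1 := by
    simp [π, LinearMap.lTensor_sub, LinearMap.lTensor_comp_apply, Coalgebra.lTensor_counit_comul]
  rw [← hπ, ← Submodule.mem_comap]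
  refine SetLike.le_def.mp (iSup_le fun p => iSup_le fun q => iSup_le fun hpq => ?_)
    (hF_comul _ x hx)
  rw [← Submodule.map_le_iff_le_comap, ← LinearMap.range_comp, LinearMap.lTensor_comp_map]
  rcases q with _ | q
  · have hπ0 : π ∘ₗ (F 0).subtype = 0 := by
      ext ⟨y, hy⟩
      obtain ⟨c, rfl⟩ := Submodule.mem_one.mp (hF_conn ▸ hy)
      simp [π]
    simp [hπ0]
  · have hp : F p ≤ F n := hF_mono (by omega)
    have hfactor : TensorProduct.map (F p).subtype (π ∘ₗ (F (q + 1)).subtype) =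
        (F n).subtype.rTensor H ∘ₗ
          TensorProduct.map (Submodule.inclusion hp) (π ∘ₗ (F (q + 1)).subtype) := by
      ext; rfl
    rw [hfactor]
    exact LinearMap.range_comp_le_range _ _

lemma convolution_mul_sub_map_mul {f : H →ₗ[k] R} (g : H →ₐ[k] R) {p q : ℕ}
    (hmul : ∀ a b, a + b ≤ p + q + 1 → ∀ x ∈ F a, ∀ y ∈ F b, f (x * y) = f x * f y)
    {x y : H} (hx : x ∈ F (p + 1)) (hy : y ∈ F (q + 1)) :
    convolution f g.toLinearMap (x * y) - f (x * y) =
      convolution f g.toLinearMap x * convolution f g.toLinearMap y - f x * f y := by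
  set Θ : H ⊗[k] H →ₗ[k] R := LinearMap.mul' k R ∘ₗ TensorProduct.map f g.toLinearMap
  have hΘ : ∀ z, Θ (z ⊗ₜ[k] 1) = f z := fun z => by simp [Θ]
  have hrest : ∀ z, Θ (Coalgebra.comul (R := k) z - z ⊗ₜ[k] 1) =
      convolution f g.toLinearMap z - f z := fun z => by rw [map_sub, hΘ]; rfl
  have htmul : ∀ {n z}, z ∈ F n →
      z ⊗ₜ[k] (1 : H) ∈ LinearMap.range ((F n).subtype.rTensor H) :=
    fun hz => ⟨⟨_, hz⟩ ⊗ₜ 1, rfl⟩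
  set rx := Coalgebra.comul (R := k) x - x ⊗ₜ[k] 1
  set ry := Coalgebra.comul (R := k) y - y ⊗ₜ[k] 1
  have hrx := comul_sub_tmul_one_mem_range_rTensor hF_mono hF_comul hF_conn hx
  have hry := comul_sub_tmul_one_mem_range_rTensor hF_mono hF_comul hF_conn hy
  have hsplit : Coalgebra.comul (R := k) (x * y) =
      (x ⊗ₜ[k] 1) * (y ⊗ₜ[k] 1) + (x ⊗ₜ[k] 1) * ry + rx * (y ⊗ₜ[k] 1) + rx * ry := by
    rw [Bialgebra.comul_mul]; simp only [rx, ry]; noncomm_ring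
  have h₁ := mul'_map_mul_of_mem_range_rTensor g (hmul _ _ (by omega)) (htmul hx) hry
  have h₂ := mul'_map_mul_of_mem_range_rTensor g (hmul _ _ (by omega)) hrx (htmul hy)
  have h₃ := mul'_map_mul_of_mem_range_rTensor g (hmul _ _ (by omega)) hrx hry
  have h₀ : Θ ((x ⊗ₜ[k] 1) * (y ⊗ₜ[k] 1)) = f (x * y) := by
    rw [Algebra.TensorProduct.tmul_mul_tmul, one_mul, hΘ]
  change Θ (Coalgebra.comul (R := k) (x * y)) - _ = _
  rw [hsplit, map_add, map_add, map_add, h₀]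
  simp only [Θ, LinearMap.comp_apply] at h₁ h₂ h₃ hrest hΘ ⊢
  rw [h₁, h₂, h₃, hΘ, hΘ, hrest, hrest]
  ring

lemma map_mul_of_rotaBaxter_of_mem_succ {P : R →ₗ[k] R}
    (hP : ∀ x y : R, P x * P y = P (x * P y) + P (P x * y) - P (x * y)) (g : H →ₐ[k] R)
    {f : H →ₗ[k] R} (hrec : ∀ x : H, Coalgebra.counit (R := k) x = 0 →
      f x = -P (convolution f g.toLinearMap x - f x)) {p q : ℕ}
    (hmul : ∀ a b, a + b ≤ p + q + 1 → ∀ x ∈ F a, ∀ y ∈ F b, f (x * y) = f x * f y)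
    {u v : H} (hu : u ∈ F (p + 1)) (hv : v ∈ F (q + 1))
    (hu₀ : Coalgebra.counit (R := k) u = 0) (hv₀ : Coalgebra.counit (R := k) v = 0) :
    f (u * v) = f u * f v := by
  set ψ := convolution f g.toLinearMap
  have huv₀ : Coalgebra.counit (R := k) (u * v) = 0 := by
    rw [Bialgebra.counit_mul, hu₀, zero_mul]
  have hrb := mul_eq_neg_map_of_rotaBaxter hP (hrec u hu₀) (hrec v hv₀)
  rw [sub_add_cancel, sub_add_cancel] at hrb
  calc f (u * v) = -P (ψ (u * v) - f (u * v)) := hrec _ huv₀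
    _ = -P (ψ u * ψ v - f u * f v) := by
      rw [convolution_mul_sub_map_mul hF_mono hF_comul hF_conn g hmul hu hv]
    _ = f u * f v := hrb.symm

variable (hF_union : (⨆ n, F n) = ⊤)
include hF_union

theorem map_mul_of_rotaBaxter_recursion {P : R →ₗ[k] R}
    (hP : ∀ x y : R, P x * P y = P (x * P y) + P (P x * y) - P (x * y)) (g : H →ₐ[k] R)
    {f : H →ₗ[k] R} (hf : f 1 = 1) (hrec : ∀ x : H, Coalgebra.counit (R := k) x = 0 →
      f x = -P (convolution f g.toLinearMap x - f x)) (x y : H) :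
    f (x * y) = f x * f y := by
  have hone : ∀ n, (1 : H) ∈ F n := fun n =>
    hF_mono (Nat.zero_le n) (hF_conn ▸ Submodule.one_le.mp le_rfl)
  have hdeg : ∀ n a b, a + b = n → ∀ x ∈ F a, ∀ y ∈ F b, f (x * y) = f x * f y := by
    intro n
    induction n using Nat.strong_induction_on with | _ n ih => ?_
    rintro a b rfl x hx y hy
    rcases a with _ | p
    · obtain ⟨c, rfl⟩ := Submodule.mem_one.mp (hF_conn ▸ hx)
      exact map_algebraMap_mul hf c y
    rcases b with _ | q
    · obtain ⟨c, rfl⟩ := Submodule.mem_one.mp (hF_conn ▸ hy)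
      exact map_mul_algebraMap hf x c
    refine map_mul_of_map_mul_sub_counit_smul_one hf ?_
    exact map_mul_of_rotaBaxter_of_mem_succ hF_mono hF_comul hF_conn hP g hrec
      (fun a b hab => ih (a + b) (by omega) a b rfl)
      (sub_mem hx (Submodule.smul_mem _ _ (hone _)))
      (sub_mem hy (Submodule.smul_mem _ _ (hone _)))
      (counit_sub_counit_smul_one x) (counit_sub_counit_smul_one y)
  have hmem : ∀ z : H, ∃ n, z ∈ F n := fun z =>
    (Submodule.mem_iSup_of_directed F hF_mono.directed_le).mp (hF_union ▸ Submodule.mem_top)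
  obtain ⟨a, hx⟩ := hmem x
  obtain ⟨b, hy⟩ := hmem y
  exact hdeg _ a b rfl x hx y hy

end Filtration

theorem algebraic_birkhoff_decomposition_general
    {k H R : Type*} [CommRing k] [CommRing H] [HopfAlgebra k H] [CommRing R] [Algebra k R]
    -- the filtration making `H` a connected filtered Hopf algebra
    (F : ℕ → Submodule k H)
    (hF_mono : Monotone F)
    (hF_union : (⨆ n, F n) = ⊤)
    (hF_comul : ∀ n : ℕ, ∀ x ∈ F n, Coalgebra.comul (R := k) x ∈
      ⨆ (p : ℕ) (q : ℕ) (_ : p + q = n),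
        LinearMap.range (TensorProduct.map (F p).subtype (F q).subtype))
    (hF_conn : F 0 = (1 : Submodule k H))
    -- the Rota-Baxter operator of weight -1
    (P : R →ₗ[k] R)
    (hP : ∀ x y : R, P x * P y = P (x * P y) + P (P x * y) - P (x * y))
    -- the algebra homomorphism to be decomposed
    (φ : H →ₐ[k] R)
    -- the maps `φ₋` and `φ₊` defined recursively on the filtration
    (φm φp : H →ₗ[k] R)
    (hφm_one : φm 1 = 1) (hφp_one : φp 1 = 1)
    (hφm_rec : ∀ x : H, Coalgebra.counit (R := k) x = 0 →
      φm x = -P (φ x + (LinearMap.mul' k R ∘ₗ TensorProduct.map φm φ.toLinearMap)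
        (Coalgebra.comul (R := k) x - x ⊗ₜ[k] 1 - 1 ⊗ₜ[k] x)))
    (hφp_rec : ∀ x : H, Coalgebra.counit (R := k) x = 0 →
      φp x = (φ x + (LinearMap.mul' k R ∘ₗ TensorProduct.map φm φ.toLinearMap)
          (Coalgebra.comul (R := k) x - x ⊗ₜ[k] 1 - 1 ⊗ₜ[k] x)) -
        P (φ x + (LinearMap.mul' k R ∘ₗ TensorProduct.map φm φ.toLinearMap)
          (Coalgebra.comul (R := k) x - x ⊗ₜ[k] 1 - 1 ⊗ₜ[k] x))) :
    -- φ₋ and φ₊ are algebra homomorphisms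
    (∀ x y : H, φm (x * y) = φm x * φm y) ∧
    (∀ x y : H, φp (x * y) = φp x * φp y) ∧
    -- ranges: φ₋(H) ⊆ k·1 + P(R), φ₊(H) ⊆ k·1 + (id - P)(R)
    (∀ x : H, φm x ∈ (1 : Submodule k R) ⊔ LinearMap.range P) ∧
    (∀ x : H, φp x ∈ (1 : Submodule k R) ⊔ LinearMap.range (LinearMap.id - P)) ∧
    -- φ₋ ⋆ φ = φ₊
    convolution φm φ.toLinearMap = φp ∧
    -- equivalently φ = φ₋^{⋆(-1)} ⋆ φ₊, where φ₋^{⋆(-1)} is the convolution inverse of φ₋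
    (∃ φmInv : H →ₗ[k] R,
      convolution φmInv φm = Algebra.linearMap k R ∘ₗ Coalgebra.counit ∧
      convolution φm φmInv = Algebra.linearMap k R ∘ₗ Coalgebra.counit ∧
      convolution φmInv φp = φ.toLinearMap) := by
  set ψ := convolution φm φ.toLinearMap
  have hprep : ∀ x, φ x + (LinearMap.mul' k R ∘ₗ TensorProduct.map φm φ.toLinearMap)
      (Coalgebra.comul (R := k) x - x ⊗ₜ[k] 1 - 1 ⊗ₜ[k] x) = ψ x - φm x := fun x => by
    rw [convolution_apply_eq_add_add hφm_one (map_one φ), LinearMap.comp_apply]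
    simp only [AlgHom.toLinearMap_apply]
    abel
  have hrec : ∀ x, Coalgebra.counit (R := k) x = 0 → φm x = -P (ψ x - φm x) := fun x hx => by
    rw [← hprep]; exact hφm_rec x hx
  have hm_mul :=
    map_mul_of_rotaBaxter_recursion hF_mono hF_comul hF_conn hF_union hP φ hφm_one hrec
  have hconv : ψ = φp := by
    refine LinearMap.ext_of_map_one_of_counit_eq_zero ?_ fun x hx => ?_
    · simp [ψ, convolution, Algebra.TensorProduct.one_def, hφm_one, hφp_one]
    · rw [hφp_rec x hx, hprep, sub_eq_add_neg (ψ x - φm x), ← hrec x hx, sub_add_cancel]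
  let φmA : H →ₐ[k] R := AlgHom.ofLinearMap φm hφm_one hm_mul
  refine ⟨hm_mul, hconv ▸ φmA.map_mul_convolution φ,
    map_mem_one_sup_of_counit_eq_zero hφm_one fun x hx =>
      ⟨-(ψ x - φm x), by rw [map_neg, ← hrec x hx]⟩,
    map_mem_one_sup_of_counit_eq_zero hφp_one fun x hx => ⟨_, (hφp_rec x hx).symm⟩, hconv,
    φm ∘ₗ HopfAlgebra.antipode k, φmA.convolution_comp_antipode_self,
    φmA.convolution_self_comp_antipode, ?_⟩
  rw [← hconv]
  exact convolution_cancel_left φmA.convolution_comp_antipode_self _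

/-- **Algebraic Birkhoff Decomposition.** Let `H` be a commutative connected filtered
Hopf algebra over `k` (with filtration `F`), let `(R, P)` be a commutative Rota–Baxter
`k`-algebra of weight `-1`, and let `φ : H → R` be a `k`-algebra homomorphism.  If
`φ₋, φ₊ : H → R` are the `k`-linear maps with `φ₋(1) = 1 = φ₊(1)` satisfying, for every
`x ∈ ker ε` (with reduced coproduct `Δ(x) - x⊗1 - 1⊗x = Σ x' ⊗ x''`), the recursions
`φ₋(x) = -P(φ(x) + Σ φ₋(x')φ(x''))` and `φ₊(x) = (id - P)(φ(x) + Σ φ₋(x')φ(x''))`,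
then `φ₋` and `φ₊` are algebra homomorphisms, `φ₋(H) ⊆ k·1 + P(R)`,
`φ₊(H) ⊆ k·1 + (id - P)(R)`, `φ₋ ⋆ φ = φ₊`, and `φ = φ₋^{⋆(-1)} ⋆ φ₊` where
`φ₋^{⋆(-1)}` is the convolution inverse of `φ₋`. -/
theorem algebraic_birkhoff_decomposition
    {k H R : Type*} [CommRing k] [CommRing H] [HopfAlgebra k H] [CommRing R] [Algebra k R]
    -- the filtration making `H` a connected filtered Hopf algebra
    (F : ℕ → Submodule k H)
    (hF_mono : Monotone F)
    (hF_union : (⨆ n, F n) = ⊤)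
    (hF_mul : ∀ p q : ℕ, ∀ x ∈ F p, ∀ y ∈ F q, x * y ∈ F (p + q))
    (hF_comul : ∀ n : ℕ, ∀ x ∈ F n, Coalgebra.comul (R := k) x ∈
      ⨆ (p : ℕ) (q : ℕ) (_ : p + q = n),
        LinearMap.range (TensorProduct.map (F p).subtype (F q).subtype))
    (hF_conn : F 0 = (1 : Submodule k H))
    -- the Rota-Baxter operator of weight -1
    (P : R →ₗ[k] R)
    (hP : ∀ x y : R, P x * P y = P (x * P y) + P (P x * y) - P (x * y))
    -- the algebra homomorphism to be decomposed
    (φ : H →ₐ[k] R)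
    -- the maps `φ₋` and `φ₊` defined recursively on the filtration
    (φm φp : H →ₗ[k] R)
    (hφm_one : φm 1 = 1) (hφp_one : φp 1 = 1)
    (hφm_rec : ∀ x : H, Coalgebra.counit (R := k) x = 0 →
      φm x = -P (φ x + (LinearMap.mul' k R ∘ₗ TensorProduct.map φm φ.toLinearMap)
        (Coalgebra.comul (R := k) x - x ⊗ₜ[k] 1 - 1 ⊗ₜ[k] x)))
    (hφp_rec : ∀ x : H, Coalgebra.counit (R := k) x = 0 →
      φp x = (φ x + (LinearMap.mul' k R ∘ₗ TensorProduct.map φm φ.toLinearMap)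
          (Coalgebra.comul (R := k) x - x ⊗ₜ[k] 1 - 1 ⊗ₜ[k] x)) -
        P (φ x + (LinearMap.mul' k R ∘ₗ TensorProduct.map φm φ.toLinearMap)
          (Coalgebra.comul (R := k) x - x ⊗ₜ[k] 1 - 1 ⊗ₜ[k] x))) :
    -- φ₋ and φ₊ are algebra homomorphisms
    (∀ x y : H, φm (x * y) = φm x * φm y) ∧
    (∀ x y : H, φp (x * y) = φp x * φp y) ∧
    -- ranges: φ₋(H) ⊆ k·1 + P(R), φ₊(H) ⊆ k·1 + (id - P)(R)
    (∀ x : H, φm x ∈ (1 : Submodule k R) ⊔ LinearMap.range P) ∧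
    (∀ x : H, φp x ∈ (1 : Submodule k R) ⊔ LinearMap.range (LinearMap.id - P)) ∧
    -- φ₋ ⋆ φ = φ₊
    convolution φm φ.toLinearMap = φp ∧
    -- equivalently φ = φ₋^{⋆(-1)} ⋆ φ₊, where φ₋^{⋆(-1)} is the convolution inverse of φ₋
    (∃ φmInv : H →ₗ[k] R,
      convolution φmInv φm = Algebra.linearMap k R ∘ₗ Coalgebra.counit ∧
      convolution φm φmInv = Algebra.linearMap k R ∘ₗ Coalgebra.counit ∧
      convolution φmInv φp = φ.toLinearMap) :=
  algebraic_birkhoff_decomposition_general F hF_mono hF_union hF_comul hF_conn P hP φ φm φp hφm_one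
    hφp_one hφm_rec hφp_rec
end

section
/- (Differential Algebraic Birkhoff Decomposition) Let H be a commutative connected filtered Hopf algebra over a commutative ring k equipped with a k-linear differential operator d: H → H making (H,d) a differential Hopf algebra, i.e., d(xy) = d(x)y + x d(y) and Δ(d(x)) = Σ (d(x₍₁₎) ⊗ x₍₂₎ + x₍₁₎ ⊗ d(x₍₂₎)) for all x ∈ H. Let (R,P,∂) be a commutative differential Rota–Baxter k-algebra of weight −1, i.e., (R,P) is a Rota–Baxter algebra of weight −1, ∂ is a derivation on R, and P∘∂ = ∂∘P. Let φ: H → R be a k-algebra homomorphism with φ∘d = ∂∘φ. Then the maps φ₋ and φ₊ of the Algebraic Birkhoff Decomposition of φ (defined by φ₋(1)=φ₊(1)=1 and recursively φ₋(x) = −P(φ(x) + Σ φ₋(x′)φ(x″)), φ₊(x) = (id−P)(φ(x) + Σ φ₋(x′)φ(x″)) for x ∈ ker ε with reduced coproduct Σ x′⊗x″) also satisfy φ₋∘d = ∂∘φ₋ and φ₊∘d = ∂∘φ₊. -/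
open TensorProduct

/-- The projection `x ↦ x - ε(x)·1` onto the "augmentation ideal" part. -/
private def piProj (k H : Type*) [CommRing k] [CommRing H] [HopfAlgebra k H] : H →ₗ[k] H :=
  LinearMap.id - (Algebra.linearMap k H) ∘ₗ (Coalgebra.counit (R := k))

private lemma piProj_apply {k H : Type*} [CommRing k] [CommRing H] [HopfAlgebra k H] (a : H) :
    piProj k H a = a - algebraMap k H (Coalgebra.counit (R := k) a) := rfl

private lemma counit_piProj {k H : Type*} [CommRing k] [CommRing H] [HopfAlgebra k H] (a : H) :
    Coalgebra.counit (R := k) (piProj k H a) = 0 := by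
  rw [piProj_apply, map_sub, Bialgebra.counit_algebraMap, sub_self]

private lemma algebraMap_mem_F {k H : Type*} [CommRing k] [CommRing H] [HopfAlgebra k H]
    (F : ℕ → Submodule k H) (hF_mono : Monotone F) (hF_conn : F 0 = (1 : Submodule k H))
    (p : ℕ) (c : k) : algebraMap k H c ∈ F p := by
  apply hF_mono (Nat.zero_le p)
  rw [hF_conn, Submodule.one_eq_range]
  exact ⟨c, rfl⟩

private lemma piProj_mem {k H : Type*} [CommRing k] [CommRing H] [HopfAlgebra k H]
    (F : ℕ → Submodule k H) (hF_mono : Monotone F) (hF_conn : F 0 = (1 : Submodule k H))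
    (p : ℕ) (a : H) (ha : a ∈ F p) : piProj k H a ∈ F p := by
  rw [piProj_apply]
  exact sub_mem ha (algebraMap_mem_F F hF_mono hF_conn p _)

private lemma piProj_eq_zero {k H : Type*} [CommRing k] [CommRing H] [HopfAlgebra k H]
    (F : ℕ → Submodule k H) (hF_conn : F 0 = (1 : Submodule k H))
    (a : H) (ha : a ∈ F 0) : piProj k H a = 0 := by
  rw [hF_conn, Submodule.one_eq_range] at ha
  obtain ⟨c, rfl⟩ := ha
  rw [piProj_apply, Algebra.linearMap_apply, Bialgebra.counit_algebraMap, sub_self]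

/-- The counit kills the image of the coderivation `d`. -/
private lemma counit_d_eq_zero {k H : Type*} [CommRing k] [CommRing H] [HopfAlgebra k H]
    (d : H →ₗ[k] H)
    (hd_comul : Coalgebra.comul (R := k) ∘ₗ d =
      (TensorProduct.map d LinearMap.id + TensorProduct.map LinearMap.id d) ∘ₗ
        Coalgebra.comul (R := k)) (x : H) :
    Coalgebra.counit (R := k) (d x) = 0 := by
  have swap1 : ∀ t : H ⊗[k] H,
      LinearMap.lTensor H (Coalgebra.counit (R := k)) (TensorProduct.map d LinearMap.id t)
        = LinearMap.rTensor k d (LinearMap.lTensor H (Coalgebra.counit (R := k)) t) := by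
    intro t
    induction t using TensorProduct.induction_on with
    | zero => simp
    | tmul a b => simp
    | add u v hu hv => simp [hu, hv]
  have swap2 : ∀ t : H ⊗[k] H,
      LinearMap.lTensor H (Coalgebra.counit (R := k)) (TensorProduct.map LinearMap.id d t)
        = LinearMap.lTensor H (Coalgebra.counit (R := k) ∘ₗ d) t := by
    intro t
    induction t using TensorProduct.induction_on with
    | zero => simp
    | tmul a b => simp
    | add u v hu hv => simp [hu, hv]
  have hz : LinearMap.lTensor H ((Coalgebra.counit (R := k)) ∘ₗ d)
      (Coalgebra.comul (R := k) x) = 0 := by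
    have h := congrArg (LinearMap.lTensor H (Coalgebra.counit (R := k)))
      (LinearMap.congr_fun hd_comul x)
    simp only [LinearMap.comp_apply, LinearMap.add_apply, map_add] at h
    rw [Coalgebra.lTensor_counit_comul, swap1, swap2, Coalgebra.lTensor_counit_comul,
      LinearMap.rTensor_tmul] at h
    exact (left_eq_add.mp h)
  have swap3 : ∀ t : H ⊗[k] H,
      LinearMap.rTensor k (Coalgebra.counit (R := k))
        (LinearMap.lTensor H (Coalgebra.counit (R := k) ∘ₗ d) t)
      = LinearMap.lTensor k (Coalgebra.counit (R := k) ∘ₗ d)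
        (LinearMap.rTensor H (Coalgebra.counit (R := k)) t) := by
    intro t
    induction t using TensorProduct.induction_on with
    | zero => simp
    | tmul a b => simp
    | add u v hu hv => simp [hu, hv]
  have h3 := congrArg (LinearMap.rTensor k (Coalgebra.counit (R := k))) hz
  rw [swap3, Coalgebra.rTensor_counit_comul, map_zero, LinearMap.lTensor_tmul] at h3
  have h4 := congrArg (TensorProduct.lid k k) h3
  simpa using h4

/-- Connectedness: the reduced coproduct of an element of `F (n+1) ∩ ker ε` lies in
`F n ⊗ H`. -/
private lemma reduced_comul_mem {k H : Type*} [CommRing k] [CommRing H] [HopfAlgebra k H]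
    (F : ℕ → Submodule k H) (hF_mono : Monotone F)
    (hF_comul : ∀ n : ℕ, ∀ x ∈ F n, Coalgebra.comul (R := k) x ∈
      ⨆ (p : ℕ) (q : ℕ) (_ : p + q = n),
        LinearMap.range (TensorProduct.map (F p).subtype (F q).subtype))
    (hF_conn : F 0 = (1 : Submodule k H))
    (n : ℕ) (x : H) (hx : x ∈ F (n+1)) (hx0 : Coalgebra.counit (R := k) x = 0) :
    Coalgebra.comul (R := k) x - x ⊗ₜ[k] (1:H) - (1:H) ⊗ₜ[k] x ∈
      LinearMap.range (TensorProduct.map (F n).subtype (LinearMap.id : H →ₗ[k] H)) := by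
  have hπdef : piProj k H = LinearMap.id - (Algebra.linearMap k H) ∘ₗ
      (Coalgebra.counit (R := k)) := rfl
  have hid : TensorProduct.map (piProj k H) (piProj k H) (Coalgebra.comul (R := k) x)
      = Coalgebra.comul (R := k) x - x ⊗ₜ[k] (1:H) - (1:H) ⊗ₜ[k] x := by
    have hmap : TensorProduct.map (piProj k H) (piProj k H) (Coalgebra.comul (R := k) x) =
        LinearMap.rTensor H (piProj k H)
          (LinearMap.lTensor H (piProj k H) (Coalgebra.comul (R := k) x)) := by
      rw [← LinearMap.rTensor_comp_lTensor, LinearMap.comp_apply]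
    have hl : LinearMap.lTensor H (piProj k H) (Coalgebra.comul (R := k) x)
        = Coalgebra.comul (R := k) x - x ⊗ₜ[k] (1:H) := by
      rw [hπdef, LinearMap.lTensor_sub, LinearMap.sub_apply, LinearMap.lTensor_id,
        LinearMap.id_apply, LinearMap.lTensor_comp, LinearMap.comp_apply,
        Coalgebra.lTensor_counit_comul, LinearMap.lTensor_tmul, Algebra.linearMap_apply,
        map_one]
    have hr : LinearMap.rTensor H (piProj k H) (Coalgebra.comul (R := k) x)
        = Coalgebra.comul (R := k) x - (1:H) ⊗ₜ[k] x := by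
      rw [hπdef, LinearMap.rTensor_sub, LinearMap.sub_apply, LinearMap.rTensor_id,
        LinearMap.id_apply, LinearMap.rTensor_comp, LinearMap.comp_apply,
        Coalgebra.rTensor_counit_comul, LinearMap.rTensor_tmul, Algebra.linearMap_apply,
        map_one]
    have hπx : piProj k H x = x := by
      rw [piProj_apply, hx0, map_zero, sub_zero]
    rw [hmap, hl, map_sub, hr, LinearMap.rTensor_tmul, hπx]
    abel
  rw [← hid]
  have hmem := hF_comul (n+1) x hx
  have hle : (⨆ (p : ℕ) (q : ℕ) (_ : p + q = n+1),
      LinearMap.range (TensorProduct.map (F p).subtype (F q).subtype)) ≤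
      Submodule.comap (TensorProduct.map (piProj k H) (piProj k H))
        (LinearMap.range (TensorProduct.map (F n).subtype (LinearMap.id : H →ₗ[k] H))) := by
    refine iSup_le fun p => iSup_le fun q => iSup_le fun hpq => ?_
    rintro t ⟨s, rfl⟩
    induction s using TensorProduct.induction_on with
    | zero => simp
    | tmul a b =>
      simp only [Submodule.mem_comap, TensorProduct.map_tmul, Submodule.coe_subtype]
      rcases Nat.eq_zero_or_pos q with hq | hq
      · rw [piProj_eq_zero F hF_conn b.1 (by rw [hq] at hpq; exact (by omega : q = 0) ▸ b.2)]
        rw [TensorProduct.tmul_zero]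
        exact zero_mem _
      · refine ⟨⟨piProj k H a.1,
          hF_mono (by omega : p ≤ n) (piProj_mem F hF_mono hF_conn p a.1 a.2)⟩ ⊗ₜ[k]
          piProj k H b.1, ?_⟩
        simp
    | add u v hu hv =>
      simp only [map_add, Submodule.mem_comap] at *
      exact Submodule.add_mem _ hu hv
  exact Submodule.mem_comap.mp (hle hmem)

/-- **Differential Algebraic Birkhoff Decomposition.** Let `H` be a commutative connected
filtered Hopf algebra over `k` with a differential operator `d` making `(H, d)` a
differential Hopf algebra (so `d` is a derivation and
`Δ(d(x)) = Σ (d(x₍₁₎) ⊗ x₍₂₎ + x₍₁₎ ⊗ d(x₍₂₎))`).  Let `(R, P, ∂)` be a commutative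
differential Rota–Baxter `k`-algebra of weight `-1` (so `∂` is a derivation commuting
with `P`), and let `φ : H → R` be a `k`-algebra homomorphism with `φ ∘ d = ∂ ∘ φ`.
Then the Birkhoff components `φ₋, φ₊` (defined by `φ₋(1) = φ₊(1) = 1` and the recursions
`φ₋(x) = -P(φ(x) + Σ φ₋(x')φ(x''))`, `φ₊(x) = (id - P)(φ(x) + Σ φ₋(x')φ(x''))` for
`x ∈ ker ε` with reduced coproduct `Σ x' ⊗ x''`) satisfy `φ₋ ∘ d = ∂ ∘ φ₋` and
`φ₊ ∘ d = ∂ ∘ φ₊`. -/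
theorem differential_algebraic_birkhoff_decomposition
    {k H R : Type*} [CommRing k] [CommRing H] [HopfAlgebra k H] [CommRing R] [Algebra k R]
    -- the filtration making `H` a connected filtered Hopf algebra
    (F : ℕ → Submodule k H)
    (hF_mono : Monotone F)
    (hF_union : (⨆ n, F n) = ⊤)
    (hF_mul : ∀ p q : ℕ, ∀ x ∈ F p, ∀ y ∈ F q, x * y ∈ F (p + q))
    (hF_comul : ∀ n : ℕ, ∀ x ∈ F n, Coalgebra.comul (R := k) x ∈
      ⨆ (p : ℕ) (q : ℕ) (_ : p + q = n),
        LinearMap.range (TensorProduct.map (F p).subtype (F q).subtype))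
    (hF_conn : F 0 = (1 : Submodule k H))
    -- the differential structure on H making it a differential Hopf algebra
    (d : H →ₗ[k] H)
    (hd_leibniz : ∀ x y : H, d (x * y) = d x * y + x * d y)
    (hd_comul : Coalgebra.comul (R := k) ∘ₗ d =
      (TensorProduct.map d LinearMap.id + TensorProduct.map LinearMap.id d) ∘ₗ
        Coalgebra.comul (R := k))
    -- the Rota-Baxter operator of weight -1
    (P : R →ₗ[k] R)
    (hP : ∀ x y : R, P x * P y = P (x * P y) + P (P x * y) - P (x * y))
    -- the derivation ∂ on R, commuting with P
    (der : R →ₗ[k] R)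
    (hder_leibniz : ∀ x y : R, der (x * y) = der x * y + x * der y)
    (hPder : P ∘ₗ der = der ∘ₗ P)
    -- the algebra homomorphism φ, compatible with the differential structures
    (φ : H →ₐ[k] R)
    (hφd : φ.toLinearMap ∘ₗ d = der ∘ₗ φ.toLinearMap)
    -- the maps `φ₋` and `φ₊` of the Algebraic Birkhoff Decomposition of φ
    (φm φp : H →ₗ[k] R)
    (hφm_one : φm 1 = 1) (hφp_one : φp 1 = 1)
    (hφm_rec : ∀ x : H, Coalgebra.counit (R := k) x = 0 →
      φm x = -P (φ x + (LinearMap.mul' k R ∘ₗ TensorProduct.map φm φ.toLinearMap)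
        (Coalgebra.comul (R := k) x - x ⊗ₜ[k] 1 - 1 ⊗ₜ[k] x)))
    (hφp_rec : ∀ x : H, Coalgebra.counit (R := k) x = 0 →
      φp x = (φ x + (LinearMap.mul' k R ∘ₗ TensorProduct.map φm φ.toLinearMap)
          (Coalgebra.comul (R := k) x - x ⊗ₜ[k] 1 - 1 ⊗ₜ[k] x)) -
        P (φ x + (LinearMap.mul' k R ∘ₗ TensorProduct.map φm φ.toLinearMap)
          (Coalgebra.comul (R := k) x - x ⊗ₜ[k] 1 - 1 ⊗ₜ[k] x))) :
    φm ∘ₗ d = der ∘ₗ φm ∧ φp ∘ₗ d = der ∘ₗ φp := by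
  have hφdx : ∀ b : H, φ (d b) = der (φ b) := fun b => LinearMap.congr_fun hφd b
  have hφdx' : ∀ b : H, φ.toLinearMap (d b) = der (φ.toLinearMap b) :=
    fun b => LinearMap.congr_fun hφd b
  have hd1 : d (1 : H) = 0 := by
    have h := hd_leibniz 1 1
    simp only [one_mul, mul_one] at h
    exact (left_eq_add.mp h)
  have hder1 : der (1 : R) = 0 := by
    have h := hder_leibniz 1 1
    simp only [one_mul, mul_one] at h
    exact (left_eq_add.mp h)
  have hdalg : ∀ c : k, d (algebraMap k H c) = 0 := by
    intro c
    rw [Algebra.algebraMap_eq_smul_one, map_smul, hd1, smul_zero]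
  have hεd : ∀ x : H, Coalgebra.counit (R := k) (d x) = 0 :=
    fun x => counit_d_eq_zero d hd_comul x
  -- the multiplicative step on `F n ⊗ H`
  have hND : ∀ n : ℕ, (∀ a ∈ F n, φm (d a) = der (φm a)) →
      ∀ t : H ⊗[k] H,
        t ∈ LinearMap.range (TensorProduct.map (F n).subtype (LinearMap.id : H →ₗ[k] H)) →
      (LinearMap.mul' k R ∘ₗ TensorProduct.map φm φ.toLinearMap)
        ((TensorProduct.map d (LinearMap.id : H →ₗ[k] H) +
            TensorProduct.map (LinearMap.id : H →ₗ[k] H) d) t)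
      = der ((LinearMap.mul' k R ∘ₗ TensorProduct.map φm φ.toLinearMap) t) := by
    rintro n IH t ⟨s, rfl⟩
    induction s using TensorProduct.induction_on with
    | zero => simp
    | tmul a b =>
      simp only [TensorProduct.map_tmul, Submodule.coe_subtype, LinearMap.id_coe, id_eq,
        LinearMap.add_apply, LinearMap.comp_apply, map_add, LinearMap.mul'_apply]
      rw [IH a.1 a.2, hφdx' b, hder_leibniz]
    | add u v hu hv =>
      simp only [map_add, LinearMap.add_apply, LinearMap.comp_apply] at hu hv ⊢
      rw [← hu, ← hv]
  -- the Bogoliubov-preparation step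
  have hB : ∀ n : ℕ, (∀ a ∈ F n, φm (d a) = der (φm a)) → ∀ y : H,
      Coalgebra.counit (R := k) y = 0 → y ∈ F (n+1) →
      (φ (d y) + (LinearMap.mul' k R ∘ₗ TensorProduct.map φm φ.toLinearMap)
          (Coalgebra.comul (R := k) (d y) - d y ⊗ₜ[k] 1 - 1 ⊗ₜ[k] d y))
      = der (φ y + (LinearMap.mul' k R ∘ₗ TensorProduct.map φm φ.toLinearMap)
          (Coalgebra.comul (R := k) y - y ⊗ₜ[k] 1 - 1 ⊗ₜ[k] y)) := by
    intro n IH y hy0 hyF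
    have hred := reduced_comul_mem F hF_mono hF_comul hF_conn n y hyF hy0
    have hcm : Coalgebra.comul (R := k) (d y) - d y ⊗ₜ[k] (1:H) - (1:H) ⊗ₜ[k] d y
        = (TensorProduct.map d (LinearMap.id : H →ₗ[k] H) +
            TensorProduct.map (LinearMap.id : H →ₗ[k] H) d)
          (Coalgebra.comul (R := k) y - y ⊗ₜ[k] 1 - 1 ⊗ₜ[k] y) := by
      have h := LinearMap.congr_fun hd_comul y
      simp only [LinearMap.comp_apply] at h
      rw [map_sub, map_sub, ← h]
      simp only [LinearMap.add_apply, TensorProduct.map_tmul, LinearMap.id_coe, id_eq, hd1,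
        TensorProduct.tmul_zero, TensorProduct.zero_tmul, add_zero, zero_add]
    rw [hcm, hND n IH _ hred, hφdx, map_add]
  -- the recursion step for φm
  have hmstep : ∀ n : ℕ, (∀ a ∈ F n, φm (d a) = der (φm a)) → ∀ y : H,
      Coalgebra.counit (R := k) y = 0 → y ∈ F (n+1) → φm (d y) = der (φm y) := by
    intro n IH y hy0 hyF
    rw [hφm_rec (d y) (hεd y), hφm_rec y hy0, hB n IH y hy0 hyF, map_neg der]
    congr 1
    exact LinearMap.congr_fun hPder _
  -- the recursion step for φp
  have hpstep : ∀ n : ℕ, (∀ a ∈ F n, φm (d a) = der (φm a)) → ∀ y : H,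
      Coalgebra.counit (R := k) y = 0 → y ∈ F (n+1) → φp (d y) = der (φp y) := by
    intro n IH y hy0 hyF
    rw [hφp_rec (d y) (hεd y), hφp_rec y hy0, hB n IH y hy0 hyF, map_sub der]
    congr 1
    exact LinearMap.congr_fun hPder _
  -- the main induction
  have Sm : ∀ n : ℕ, ∀ x ∈ F n, φm (d x) = der (φm x) := by
    intro n
    induction n with
    | zero =>
      intro x hx
      rw [hF_conn, Submodule.one_eq_range] at hx
      obtain ⟨c, rfl⟩ := hx
      rw [Algebra.linearMap_apply, hdalg, map_zero, Algebra.algebraMap_eq_smul_one,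
        map_smul, hφm_one, map_smul, hder1, smul_zero]
    | succ n IH =>
      intro x hx
      have hsplit : x = piProj k H x + algebraMap k H (Coalgebra.counit (R := k) x) := by
        rw [piProj_apply, sub_add_cancel]
      rw [hsplit, map_add, hdalg, add_zero, map_add, map_add,
        Algebra.algebraMap_eq_smul_one, map_smul, hφm_one, map_smul, hder1,
        smul_zero, add_zero]
      exact hmstep n IH (piProj k H x) (counit_piProj x)
        (piProj_mem F hF_mono hF_conn (n+1) x hx)
  have hexists : ∀ x : H, ∃ n, x ∈ F n := by
    intro x
    have hx : x ∈ ⨆ n, F n := by rw [hF_union]; exact Submodule.mem_top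
    exact (Submodule.mem_iSup_of_directed F hF_mono.directed_le).mp hx
  constructor
  · apply LinearMap.ext
    intro x
    simp only [LinearMap.comp_apply]
    obtain ⟨n, hn⟩ := hexists x
    exact Sm n x hn
  · apply LinearMap.ext
    intro x
    simp only [LinearMap.comp_apply]
    obtain ⟨n, hn⟩ := hexists x
    have hsplit : x = piProj k H x + algebraMap k H (Coalgebra.counit (R := k) x) := by
      rw [piProj_apply, sub_add_cancel]
    rw [hsplit, map_add, hdalg, add_zero, map_add, map_add,
      Algebra.algebraMap_eq_smul_one, map_smul, hφp_one, map_smul, hder1,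
      smul_zero, add_zero]
    exact hpstep n (Sm n) (piProj k H x) (counit_piProj x)
      (piProj_mem F hF_mono hF_conn (n+1) x (hF_mono (Nat.le_succ n) hn))
end

section
/- Let (H,Δ,ε) be a coalgebra over a commutative ring k and let (R,P) be a commutative Rota–Baxter k-algebra of weight λ. Then the operator 𝒫 on the convolution algebra Hom_k(H,R) defined by 𝒫(f) = P∘f is a Rota–Baxter operator of weight λ, i.e., for all f,g ∈ Hom_k(H,R): (P∘f) ⋆ (P∘g) = P∘((P∘f) ⋆ g) + P∘(f ⋆ (P∘g)) + λ·P∘(f ⋆ g). -/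
/-! The identity already holds for the map `M ⊗ N → R`, `x ⊗ y ↦ f x * g y`, for arbitrary
linear `f`, `g`: on pure tensors it is the Rota–Baxter identity for `f x` and `g y`.
Precomposing with the comultiplication turns it into the convolution identity. -/

open TensorProduct

theorem LinearMap.mul'_comp_map_rotaBaxter {k M N R : Type*} [CommSemiring k]
    [AddCommMonoid M] [Module k M] [AddCommMonoid N] [Module k N]
    [NonUnitalNonAssocSemiring R] [Module k R] [SMulCommClass k R R] [IsScalarTower k R R]
    (P : R →ₗ[k] R) (lam : k)
    (hP : ∀ x y : R, P x * P y = P (x * P y) + P (P x * y) + lam • P (x * y))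
    (f : M →ₗ[k] R) (g : N →ₗ[k] R) :
    LinearMap.mul' k R ∘ₗ map (P ∘ₗ f) (P ∘ₗ g) =
      P ∘ₗ (LinearMap.mul' k R ∘ₗ map (P ∘ₗ f) g) +
        P ∘ₗ (LinearMap.mul' k R ∘ₗ map f (P ∘ₗ g)) +
          lam • (P ∘ₗ (LinearMap.mul' k R ∘ₗ map f g)) := by
  refine TensorProduct.ext' fun x y => ?_
  simp only [LinearMap.comp_apply, map_tmul, LinearMap.mul'_apply, LinearMap.add_apply,
    LinearMap.smul_apply, hP]
  abel

/-- Let `(H, Δ, ε)` be a coalgebra over a commutative ring `k` and `(R, P)` a commutative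
Rota–Baxter `k`-algebra of weight `λ`.  Then `𝒫(f) = P ∘ f` is a Rota–Baxter operator
of weight `λ` on the convolution algebra `Hom_k(H, R)`:
`(P∘f) ⋆ (P∘g) = P∘((P∘f) ⋆ g) + P∘(f ⋆ (P∘g)) + λ·P∘(f ⋆ g)`. -/
theorem convolution_rotaBaxter
    {k H R : Type*} [CommRing k] [AddCommGroup H] [Module k H] [Coalgebra k H]
    [CommRing R] [Algebra k R]
    (P : R →ₗ[k] R) (lam : k)
    (hP : ∀ x y : R, P x * P y = P (x * P y) + P (P x * y) + lam • P (x * y)) :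
    ∀ f g : H →ₗ[k] R,
      convolution (P ∘ₗ f) (P ∘ₗ g) =
        P ∘ₗ convolution (P ∘ₗ f) g + P ∘ₗ convolution f (P ∘ₗ g) +
          lam • (P ∘ₗ convolution f g) := by
  intro f g
  simp only [convolution, ← LinearMap.comp_assoc,
    LinearMap.mul'_comp_map_rotaBaxter P lam hP, LinearMap.add_comp, LinearMap.smul_comp]
end

section
/- Let A be a commutative (not necessarily unital) algebra over a commutative ring k and let H_A = T(A) = ⊕_{n≥0} A^{⊗n} carry the quasi-shuffle product *. Let Δ: H_A → H_A ⊗ H_A be the deconcatenation coproduct. Then Δ is an algebra homomorphism with respect to *, i.e., for all 𝔞, 𝔟 ∈ H_A one has Δ(𝔞 * 𝔟) = Δ(𝔞) · Δ(𝔟), where the product on H_A ⊗ H_A is componentwise quasi-shuffle: (u ⊗ v)·(u′ ⊗ v′) = (u * u′) ⊗ (v * v′). -/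
/-!
Both sides are bilinear, and `T(A)` is spanned by `1` and the words `ι a * x`, so a nested
induction on words reduces the claim to the cases `x = 1` or `y = 1` (where `1` is a unit for
`q` and `Δ 1 = 1 ⊗ 1`) and `x = ι a * x'`, `y = ι b * y'`. In the last case the recursions
for `q` and `Δ` split both sides into the term `1 ⊗ q x y` plus terms in the image of left
concatenation on the first tensor factor. The point is that left concatenation
`L_a = (ι a * ·) ⊗ id` obeys, for the componentwise product, the same three-term recursion
`L_a u · L_b v = L_a (u · L_b v) + L_b (L_a u · v) + L_{ab} (u · v)` as `ι a * ·` does for `q`.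
-/

open TensorAlgebra TensorProduct

namespace TensorAlgebra

theorem induction_ι_mul {R M : Type*} [CommSemiring R] [AddCommMonoid M] [Module R M]
    {P : TensorAlgebra R M → Prop} (one : P 1) (smul : ∀ (c : R) x, P x → P (c • x))
    (add : ∀ x y, P x → P y → P (x + y)) (ι_mul : ∀ m x, P x → P (ι R m * x))
    (x : TensorAlgebra R M) : P x := by
  suffices h : ∀ z, P z → P (x * z) by simpa using h 1 one
  induction x using TensorAlgebra.induction with
  | algebraMap c => intro z hz; simpa [Algebra.algebraMap_eq_smul_one] using smul c z hz
  | ι m => exact ι_mul m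
  | mul x y hx hy => intro z hz; rw [mul_assoc]; exact hx _ (hy z hz)
  | add x y hx hy => intro z hz; rw [add_mul]; exact add _ _ (hx z hz) (hy z hz)

end TensorAlgebra

namespace TensorProduct

section map₂

variable {R T : Type*} [CommSemiring R] [AddCommMonoid T] [Module R T]
  (q : T →ₗ[R] T →ₗ[R] T)

theorem map₂_one_tmul_left [One T] (hq : ∀ x, q 1 x = x) (z : T) (v : T ⊗[R] T) :
    map₂ q q (1 ⊗ₜ z) v = (q z).lTensor T v :=
  LinearMap.congr_fun (TensorProduct.ext' fun x y => by simp [hq]) v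

theorem map₂_one_tmul_right [One T] (hq : ∀ x, q x 1 = x) (u : T ⊗[R] T) (z : T) :
    map₂ q q u (1 ⊗ₜ z) = (q.flip z).lTensor T u :=
  LinearMap.congr_fun (f := (map₂ q q).flip (1 ⊗ₜ z))
    (TensorProduct.ext' fun x y => by simp [hq]) u

theorem rTensor_map₂_one_tmul_left [One T] (hq : ∀ x, q 1 x = x) (f : T →ₗ[R] T) (z : T)
    (v : T ⊗[R] T) :
    f.rTensor T (map₂ q q (1 ⊗ₜ z) v) = map₂ q q (1 ⊗ₜ z) (f.rTensor T v) := by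
  rw [map₂_one_tmul_left q hq, map₂_one_tmul_left q hq,
    ← LinearMap.comp_apply, LinearMap.rTensor_comp_lTensor, ← LinearMap.lTensor_comp_rTensor,
    LinearMap.comp_apply]

theorem rTensor_map₂_one_tmul_right [One T] (hq : ∀ x, q x 1 = x) (f : T →ₗ[R] T)
    (u : T ⊗[R] T) (z : T) :
    f.rTensor T (map₂ q q u (1 ⊗ₜ z)) = map₂ q q (f.rTensor T u) (1 ⊗ₜ z) := by
  rw [map₂_one_tmul_right q hq, map₂_one_tmul_right q hq,
    ← LinearMap.comp_apply, LinearMap.rTensor_comp_lTensor, ← LinearMap.lTensor_comp_rTensor,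
    LinearMap.comp_apply]

theorem map₂_one_tmul_one_left [One T] (hq : ∀ x, q 1 x = x) (v : T ⊗[R] T) :
    map₂ q q (1 ⊗ₜ 1) v = v := by
  rw [map₂_one_tmul_left q hq, show q 1 = LinearMap.id from LinearMap.ext hq,
    LinearMap.lTensor_id_apply]

theorem map₂_one_tmul_one_right [One T] (hq : ∀ x, q x 1 = x) (u : T ⊗[R] T) :
    map₂ q q u (1 ⊗ₜ 1) = u := by
  rw [map₂_one_tmul_right q hq, show q.flip 1 = LinearMap.id from LinearMap.ext hq,
    LinearMap.lTensor_id_apply]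

theorem map₂_rTensor_rTensor {f g h : T →ₗ[R] T}
    (hq : ∀ x y, q (f x) (g y) = f (q x (g y)) + g (q (f x) y) + h (q x y))
    (u v : T ⊗[R] T) :
    map₂ q q (f.rTensor T u) (g.rTensor T v) =
      f.rTensor T (map₂ q q u (g.rTensor T v)) + g.rTensor T (map₂ q q (f.rTensor T u) v) +
        h.rTensor T (map₂ q q u v) := by
  induction u using TensorProduct.induction_on with
  | zero => simp
  | add u₁ u₂ hu₁ hu₂ => simp only [map_add, LinearMap.add_apply, hu₁, hu₂]; abel
  | tmul x₁ x₂ =>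
    induction v using TensorProduct.induction_on with
    | zero => simp
    | add v₁ v₂ hv₁ hv₂ => simp only [map_add, hv₁, hv₂]; abel
    | tmul y₁ y₂ => simp [hq, add_tmul]

end map₂

end TensorProduct

section Deconcatenation

variable {k A : Type*} [CommSemiring k] [AddCommMonoid A] [Module k A] [Mul A]
  (q : TensorAlgebra k A →ₗ[k] TensorAlgebra k A →ₗ[k] TensorAlgebra k A)
  (Δ : TensorAlgebra k A →ₗ[k] TensorAlgebra k A ⊗[k] TensorAlgebra k A)

theorem deconcatenation_quasiShuffle_ι_mul_ι_mul
    (hq_one_left : ∀ z, q 1 z = z) (hq_one_right : ∀ z, q z 1 = z)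
    (hq_rec : ∀ (a b : A) (x y : TensorAlgebra k A),
      q (ι k a * x) (ι k b * y) =
        ι k a * q x (ι k b * y) + ι k b * q (ι k a * x) y + ι k (a * b) * q x y)
    (hΔ_rec : ∀ (a : A) (x : TensorAlgebra k A),
      Δ (ι k a * x) = 1 ⊗ₜ (ι k a * x) + (LinearMap.mulLeft k (ι k a)).rTensor _ (Δ x))
    {a b : A} {x y : TensorAlgebra k A}
    (hxy : Δ (q x y) = map₂ q q (Δ x) (Δ y))
    (hx_by : Δ (q x (ι k b * y)) = map₂ q q (Δ x) (Δ (ι k b * y)))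
    (hax_y : Δ (q (ι k a * x) y) = map₂ q q (Δ (ι k a * x)) (Δ y)) :
    Δ (q (ι k a * x) (ι k b * y)) = map₂ q q (Δ (ι k a * x)) (Δ (ι k b * y)) := by
  have hrec := map₂_rTensor_rTensor q (f := LinearMap.mulLeft k (ι k a))
    (g := LinearMap.mulLeft k (ι k b)) (h := LinearMap.mulLeft k (ι k (a * b))) (hq_rec a b)
  have hunit : map₂ q q (1 ⊗ₜ (ι k a * x)) (1 ⊗ₜ (ι k b * y)) =
      1 ⊗ₜ q (ι k a * x) (ι k b * y) := by
    simp [hq_one_left]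
  rw [hq_rec, map_add, map_add, hΔ_rec a, hΔ_rec b, hΔ_rec (a * b), hx_by, hax_y, hxy,
    hΔ_rec a x, hΔ_rec b y]
  simp only [map_add, LinearMap.add_apply, hrec, hunit, hq_rec a b x y, tmul_add,
    rTensor_map₂_one_tmul_left q hq_one_left, rTensor_map₂_one_tmul_right q hq_one_right]
  abel

end Deconcatenation

theorem deconcatenation_is_quasiShuffle_algebra_hom_general
    {k A : Type*} [CommRing k] [NonUnitalCommRing A] [Module k A]
    (q : TensorAlgebra k A →ₗ[k] TensorAlgebra k A →ₗ[k] TensorAlgebra k A)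
    (hq_scalar_left : ∀ (c : k) (x : TensorAlgebra k A),
      q (algebraMap k (TensorAlgebra k A) c) x = c • x)
    (hq_scalar_right : ∀ (c : k) (x : TensorAlgebra k A),
      q x (algebraMap k (TensorAlgebra k A) c) = c • x)
    (hq_rec : ∀ (a b : A) (x y : TensorAlgebra k A),
      q (ι k a * x) (ι k b * y) =
        ι k a * q x (ι k b * y) + ι k b * q (ι k a * x) y + ι k (a * b) * q x y)
    -- the deconcatenation coproduct
    (Δ : TensorAlgebra k A →ₗ[k] TensorAlgebra k A ⊗[k] TensorAlgebra k A)
    (hΔ_one : Δ 1 = 1 ⊗ₜ[k] 1)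
    (hΔ_rec : ∀ (a : A) (x : TensorAlgebra k A),
      Δ (ι k a * x) = 1 ⊗ₜ[k] (ι k a * x) +
        (TensorProduct.map (LinearMap.mulLeft k (ι k a)) LinearMap.id) (Δ x)) :
    ∀ x y : TensorAlgebra k A, Δ (q x y) = TensorProduct.map₂ q q (Δ x) (Δ y) := by
  have hq_one_left : ∀ z, q 1 z = z := by simpa using hq_scalar_left 1
  have hq_one_right : ∀ z, q z 1 = z := by simpa using hq_scalar_right 1
  intro x
  induction x using TensorAlgebra.induction_ι_mul with
  | one => intro y; rw [hq_one_left, hΔ_one, map₂_one_tmul_one_left q hq_one_left]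
  | smul c x hx => intro y; simp only [map_smul, LinearMap.smul_apply, hx]
  | add x x' hx hx' => intro y; simp only [map_add, LinearMap.add_apply, hx, hx']
  | ι_mul a x hx =>
    intro y
    induction y using TensorAlgebra.induction_ι_mul with
    | one => rw [hq_one_right, hΔ_one, map₂_one_tmul_one_right q hq_one_right]
    | smul c y hy => simp only [map_smul, hy]
    | add y y' hy hy' => simp only [map_add, hy, hy']
    | ι_mul b y hy =>
      exact deconcatenation_quasiShuffle_ι_mul_ι_mul q Δ hq_one_left hq_one_right hq_rec hΔ_rec
        (hx y) (hx _) hy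

/-- Let `A` be a commutative (not necessarily unital) algebra over a commutative ring `k`
and identify `H_A = T(A) = ⊕_{n≥0} A^{⊗n}` with the tensor algebra of the `k`-module `A`,
where the pure tensor `a₁⊗⋯⊗a_n` corresponds to `ι a₁ * ⋯ * ι a_n` (concatenation
product).  Let `q` be the quasi-shuffle product (characterized by scalar multiplication on
`k = A^{⊗0}` and the recursion
`(a⊗𝔞) * (b⊗𝔟) = a⊗(𝔞 * (b⊗𝔟)) + b⊗((a⊗𝔞) * 𝔟) + (ab)⊗(𝔞 * 𝔟)`), and let `Δ` be the
deconcatenation coproduct (characterized by `Δ(1) = 1 ⊗ 1` and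
`Δ(a⊗𝔞) = 1 ⊗ (a⊗𝔞) + (a⊗ ⊗ id)(Δ(𝔞))`).  Then `Δ` is an algebra homomorphism for the
quasi-shuffle product: `Δ(𝔞 * 𝔟) = Δ(𝔞)·Δ(𝔟)`, where `H_A ⊗ H_A` carries the
componentwise quasi-shuffle product `(u⊗v)·(u'⊗v') = (u * u') ⊗ (v * v')`,
i.e. `TensorProduct.map₂ q q`. -/
theorem deconcatenation_is_quasiShuffle_algebra_hom
    {k A : Type*} [CommRing k] [NonUnitalCommRing A] [Module k A]
    [SMulCommClass k A A] [IsScalarTower k A A]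
    (q : TensorAlgebra k A →ₗ[k] TensorAlgebra k A →ₗ[k] TensorAlgebra k A)
    (hq_scalar_left : ∀ (c : k) (x : TensorAlgebra k A),
      q (algebraMap k (TensorAlgebra k A) c) x = c • x)
    (hq_scalar_right : ∀ (c : k) (x : TensorAlgebra k A),
      q x (algebraMap k (TensorAlgebra k A) c) = c • x)
    (hq_rec : ∀ (a b : A) (x y : TensorAlgebra k A),
      q (ι k a * x) (ι k b * y) =
        ι k a * q x (ι k b * y) + ι k b * q (ι k a * x) y + ι k (a * b) * q x y)
    -- the deconcatenation coproduct
    (Δ : TensorAlgebra k A →ₗ[k] TensorAlgebra k A ⊗[k] TensorAlgebra k A)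
    (hΔ_one : Δ 1 = 1 ⊗ₜ[k] 1)
    (hΔ_rec : ∀ (a : A) (x : TensorAlgebra k A),
      Δ (ι k a * x) = 1 ⊗ₜ[k] (ι k a * x) +
        (TensorProduct.map (LinearMap.mulLeft k (ι k a)) LinearMap.id) (Δ x)) :
    ∀ x y : TensorAlgebra k A, Δ (q x y) = TensorProduct.map₂ q q (Δ x) (Δ y) :=
  deconcatenation_is_quasiShuffle_algebra_hom_general q hq_scalar_left hq_scalar_right hq_rec Δ
    hΔ_one hΔ_rec
end

section
/- Fix k ≥ 1, s = (s₁,…,s_k) ∈ ℤ^k, r = (r₁,…,r_k) ∈ ℝ_{>0}^k, and x ∈ ℝ_{≥0}. For each complex ε with Re(ε) < 0, the series Z(s;r;ε,x) = Σ_{n₁ > n₂ > ⋯ > n_k > 0} ∏_{i=1}^{k} e^{(n_i + x) r_i ε} / (n_i + x)^{s_i} (sum over k-tuples of positive integers) converges absolutely, and the function ε ↦ Z(s;r;ε,x) is complex-differentiable on the half-plane Re(ε) < 0 with derivative (∂/∂ε) Z(s;r;ε,x) = Σ_{i=1}^{k} r_i · Z(s − e_i; r; ε, x), where e_i ∈ ℤ^k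 is the i-th standard unit vector. -/
open Complex

/-- The index set of the sum defining multiple zeta values: strictly decreasing
`k`-tuples of positive integers `n₁ > n₂ > ⋯ > n_k > 0`. -/
def DecreasingTuples (k : ℕ) : Type :=
  {n : Fin k → ℕ // StrictAnti n ∧ ∀ i, 0 < n i}

/-- The summand of the directional regularized multiple zeta value
`Z(s; r; ε, x) = Σ_{n₁ > ⋯ > n_k > 0} ∏ᵢ e^{(nᵢ+x) rᵢ ε} / (nᵢ+x)^{sᵢ}`. -/
noncomputable def Zterm (k : ℕ) (s : Fin k → ℤ) (r : Fin k → ℝ) (x : ℝ) (ε : ℂ)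
    (n : Fin k → ℕ) : ℂ :=
  ∏ i, Complex.exp (((((n i : ℝ) + x) * r i : ℝ)) * ε) / (((n i : ℝ) + x : ℝ) : ℂ) ^ (s i)

/-! The modulus of a summand is `∏ᵢ e^{(nᵢ+x) rᵢ Re ε} (nᵢ+x)^{-sᵢ}`: it depends only on `Re ε`,
is monotone in `Re ε`, and is a product of one-variable sequences `e^{c(n+x)}(n+x)^m` with
`c < 0`, which are summable. Hence the series converges absolutely, and uniformly on every
half-plane `Re ε < δ < 0`, so by Weierstrass' theorem it is holomorphic there and may be
differentiated termwise. Differentiating a summand brings down `Σᵢ rᵢ (nᵢ+x)`, and multiplying by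
`nᵢ+x` amounts to lowering `sᵢ` by one. -/

open Filter Asymptotics Finset

theorem summable_prod_apply_of_nonneg {ι β : Type*} [Fintype ι] {g : ι → β → ℝ}
    (hg : ∀ i, Summable (g i)) (hg0 : ∀ i b, 0 ≤ g i b) :
    Summable fun f : ι → β => ∏ i, g i (f i) := by
  classical
  refine summable_of_sum_le (c := ∏ i, ∑' b, g i b)
    (fun f => prod_nonneg fun i _ => hg0 i (f i)) fun S => ?_
  calc ∑ f ∈ S, ∏ i, g i (f i)
      ≤ ∑ f ∈ Fintype.piFinset fun i => S.image (· i), ∏ i, g i (f i) :=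
        sum_le_sum_of_subset_of_nonneg
          (fun f hf => Fintype.mem_piFinset.2 fun i => mem_image_of_mem (· i) hf)
          (fun f _ _ => prod_nonneg fun i _ => hg0 i (f i))
    _ = ∏ i, ∑ b ∈ S.image (· i), g i b := (prod_univ_sum _ _).symm
    _ ≤ ∏ i, ∑' b, g i b :=
        Finset.prod_le_prod (fun i _ => sum_nonneg fun b _ => hg0 i b)
          fun i _ => (hg i).sum_le_tsum _ fun b _ => hg0 i b

theorem summable_exp_mul_mul_zpow (m : ℤ) {c : ℝ} (hc : c < 0) {x : ℝ} (hx : 0 ≤ x) :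
    Summable fun n : ℕ => Real.exp (c * (n + x)) * ((n : ℝ) + x) ^ m := by
  have hgeom : Summable fun n : ℕ => Real.exp (c / 2 * (n + x)) :=
    Real.summable_exp_nat_mul_of_ge (by linarith) fun n => le_add_of_nonneg_right hx
  -- `y ^ m * exp (c y / 2)` tends to zero, hence is bounded
  have hlim : Tendsto (fun y : ℝ => y ^ (m : ℝ) * Real.exp (-(-c / 2) * y)) atTop (nhds 0) :=
    tendsto_rpow_mul_exp_neg_mul_atTop_nhds_zero _ _ (by linarith)
  have hO : (fun y : ℝ => Real.exp (c * y) * y ^ m) =O[atTop] fun y => Real.exp (c / 2 * y) := by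
    refine ((hlim.isBigO_one ℝ).mul (isBigO_refl (fun y => Real.exp (c / 2 * y)) _)).congr
      (fun y => ?_) fun y => one_mul _
    rw [Real.rpow_intCast, mul_right_comm, mul_assoc, ← Real.exp_add]
    ring_nf
  exact summable_of_isBigO_nat hgeom
    (hO.comp_tendsto (tendsto_atTop_add_const_right _ x tendsto_natCast_atTop_atTop))

section Zterm

variable {k : ℕ} (s : Fin k → ℤ) {r : Fin k → ℝ} {x : ℝ}

theorem norm_Zterm (hx : 0 ≤ x) (ε : ℂ) (n : Fin k → ℕ) :
    ‖Zterm k s r x ε n‖ = ∏ i, Real.exp (r i * ε.re * (n i + x)) * ((n i : ℝ) + x) ^ (-s i) := by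
  refine (norm_prod _ _).trans (prod_congr rfl fun i _ => ?_)
  have hpos : 0 ≤ (n i : ℝ) + x := by positivity
  rw [norm_div, norm_zpow, Complex.norm_exp, re_ofReal_mul, Complex.norm_real,
    Real.norm_of_nonneg hpos, zpow_neg, div_eq_mul_inv]
  ring_nf

theorem norm_Zterm_le_of_re_le (hr : ∀ i, 0 ≤ r i) (hx : 0 ≤ x) {ε ε' : ℂ} (h : ε.re ≤ ε'.re)
    (n : Fin k → ℕ) : ‖Zterm k s r x ε n‖ ≤ ‖Zterm k s r x ε' n‖ := by
  rw [norm_Zterm s hx, norm_Zterm s hx]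
  refine Finset.prod_le_prod (fun i _ => by positivity) fun i _ => ?_
  gcongr
  exact hr i

theorem summable_norm_Zterm (hr : ∀ i, 0 < r i) (hx : 0 ≤ x) {ε : ℂ} (hε : ε.re < 0) :
    Summable fun n : Fin k → ℕ => ‖Zterm k s r x ε n‖ := by
  simp_rw [norm_Zterm s hx]
  exact summable_prod_apply_of_nonneg
    (g := fun i (m : ℕ) => Real.exp (r i * ε.re * (m + x)) * ((m : ℝ) + x) ^ (-s i))
    (fun i => summable_exp_mul_mul_zpow _ (mul_neg_of_pos_of_neg (hr i) hε) hx)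
    fun i n => by positivity

theorem Zterm_sub_single (r : Fin k → ℝ) (x : ℝ) (ε : ℂ) {n : Fin k → ℕ} {i : Fin k}
    (hn : (n i : ℝ) + x ≠ 0) :
    Zterm k (s - Pi.single i 1) r x ε n = ((n i + x : ℝ) : ℂ) * Zterm k s r x ε n := by
  have hi : (s - Pi.single i 1 : Fin k → ℤ) i = s i - 1 := by simp
  have hj : ∀ j ∈ univ.erase i, (s - Pi.single i 1 : Fin k → ℤ) j = s j := fun j hj => by
    simp [ne_of_mem_erase hj]
  unfold Zterm
  rw [← mul_prod_erase _ _ (mem_univ i), ← mul_prod_erase _ _ (mem_univ i), hi,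
    prod_congr rfl fun j hj' => by rw [hj j hj'], zpow_sub_one₀ (ofReal_ne_zero.2 hn)]
  field_simp

theorem hasDerivAt_Zterm (r : Fin k → ℝ) (x : ℝ) (ε : ℂ) {n : Fin k → ℕ}
    (hn : ∀ i, (n i : ℝ) + x ≠ 0) :
    HasDerivAt (fun ε => Zterm k s r x ε n)
      (∑ i, (r i : ℂ) * Zterm k (s - Pi.single i 1) r x ε n) ε := by
  have hfactor : ∀ i ∈ univ, HasDerivAt
      (fun ε => Complex.exp ((((n i : ℝ) + x) * r i : ℝ) * ε) / (((n i : ℝ) + x : ℝ) : ℂ) ^ s i)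
      ((((n i : ℝ) + x) * r i : ℝ) *
        (Complex.exp ((((n i : ℝ) + x) * r i : ℝ) * ε) / (((n i : ℝ) + x : ℝ) : ℂ) ^ s i)) ε :=
    fun i _ => by
      simpa [mul_div_assoc', mul_comm] using
        (((hasDerivAt_id ε).const_mul _).cexp.div_const (((n i : ℝ) + x : ℝ) ^ s i : ℂ))
  refine (HasDerivAt.fun_finsetProd hfactor).congr_deriv (sum_congr rfl fun i _ => ?_)
  rw [Zterm_sub_single s r x ε (hn i), smul_eq_mul, Zterm, ← prod_erase_mul _ _ (mem_univ i)]
  push_cast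
  ring

end Zterm

theorem regularized_MZV_summable_and_hasDerivAt_general
    (k : ℕ) (s : Fin k → ℤ) (r : Fin k → ℝ) (hr : ∀ i, 0 < r i)
    (x : ℝ) (hx : 0 ≤ x) :
    (∀ ε : ℂ, ε.re < 0 →
      Summable (fun n : DecreasingTuples k => Zterm k s r x ε n.1)) ∧
    (∀ ε : ℂ, ε.re < 0 →
      HasDerivAt (fun ε' : ℂ => ∑' n : DecreasingTuples k, Zterm k s r x ε' n.1)
        (∑ i : Fin k, (r i : ℂ) *
          ∑' n : DecreasingTuples k, Zterm k (s - Pi.single i 1) r x ε n.1)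
        ε) := by
  have hnorm (s' : Fin k → ℤ) {ε : ℂ} (hε : ε.re < 0) :
      Summable fun n : DecreasingTuples k => ‖Zterm k s' r x ε n.1‖ :=
    (summable_norm_Zterm s' hr hx hε).comp_injective Subtype.val_injective
  refine ⟨fun ε hε => (hnorm s hε).of_norm, fun ε hε => ?_⟩
  -- dominate the terms on the half-plane `Re w < Re ε / 2` by their values at `Re ε / 2`
  set U := {w : ℂ | w.re < ε.re / 2}
  have hU : IsOpen U := isOpen_lt continuous_re continuous_const
  have hεU : ε ∈ U := show ε.re < ε.re / 2 by linarith
  have hderiv (n : DecreasingTuples k) (w : ℂ) :=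
    hasDerivAt_Zterm s r x w (n := n.1) fun i => by have := n.2.2 i; positivity
  have hdiff (n : DecreasingTuples k) : DifferentiableOn ℂ (fun w => Zterm k s r x w n.1) U :=
    fun w _ => (hderiv n w).differentiableAt.differentiableWithinAt
  have hbound (n : DecreasingTuples k) (w : ℂ) (hw : w ∈ U) :
      ‖Zterm k s r x w n.1‖ ≤ ‖Zterm k s r x (ε.re / 2 : ℝ) n.1‖ :=
    norm_Zterm_le_of_re_le s (fun i => (hr i).le) hx (by simpa using hw.le) n.1
  have hu := hnorm s (ε := (ε.re / 2 : ℝ)) (by rw [ofReal_re]; linarith)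
  have hD := ((differentiableOn_tsum_of_summable_norm hu hdiff hU hbound).differentiableAt
    (hU.mem_nhds hεU)).hasDerivAt
  rw [← (hasSum_deriv_of_summable_norm hu hdiff hU hbound hεU).tsum_eq] at hD
  refine hD.congr_deriv ?_
  rw [tsum_congr fun n => (hderiv n ε).deriv,
    Summable.tsum_finsetSum fun i _ => ((hnorm _ hε).of_norm).mul_left _]
  simp_rw [tsum_mul_left]

/-- Fix `k ≥ 1`, `s ∈ ℤᵏ`, `r ∈ ℝ_{>0}ᵏ` and `x ∈ ℝ_{≥0}`.  For every complex `ε` with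
`Re ε < 0` the series `Z(s;r;ε,x) = Σ_{n₁>⋯>n_k>0} ∏ᵢ e^{(nᵢ+x) rᵢ ε} / (nᵢ+x)^{sᵢ}`
converges absolutely, and `ε ↦ Z(s;r;ε,x)` is complex-differentiable on the half-plane
`Re ε < 0` with derivative `∂Z/∂ε = Σᵢ rᵢ · Z(s - eᵢ; r; ε, x)` where `eᵢ` is the `i`-th
standard unit vector of `ℤᵏ`. -/
theorem regularized_MZV_summable_and_hasDerivAt
    (k : ℕ) (hk : 1 ≤ k) (s : Fin k → ℤ) (r : Fin k → ℝ) (hr : ∀ i, 0 < r i)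
    (x : ℝ) (hx : 0 ≤ x) :
    (∀ ε : ℂ, ε.re < 0 →
      Summable (fun n : DecreasingTuples k => Zterm k s r x ε n.1)) ∧
    (∀ ε : ℂ, ε.re < 0 →
      HasDerivAt (fun ε' : ℂ => ∑' n : DecreasingTuples k, Zterm k s r x ε' n.1)
        (∑ i : Fin k, (r i : ℂ) *
          ∑' n : DecreasingTuples k, Zterm k (s - Pi.single i 1) r x ε n.1)
        ε) :=
  regularized_MZV_summable_and_hasDerivAt_general k s r hr x hx
end

section
/- The function g(ε) = e^{3ε}/((1 − e^{ε})(1 − e^{2ε})) + e^{ε}/(ε(1 − e^{ε})) (the regularized double sum minus its subdivergence) satisfies lim_{ε → 0, ε ≠ 0} ( g(ε) + 1/(2ε²) − 1/(4ε) ) = 3/8; equivalently, the constant term of the Laurent expansion of g at ε = 0 equals −(3/2)ζ(−1) + ζ(0)² = 3/8, which is the renormalized value of ζ(0,0). -/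
/-!
Put `u = e^ε`, `w = (u - 1)/ε` and `s = (w - 1)/ε`. Then `1 - u = -εw` and `1 - u² = -εw(1 + u)`,
and over the common denominator `4ε²w²(1 + u)` the numerator of `g + 1/(2ε²) - 1/(4ε)` is
`4(w - 1)² + 2εw(w - 1)(w - 6) + ε²w²(12 - 5w) + 4ε³w³`, which is `ε²` times a polynomial in `ε`
and `s`. So the expression is a rational function of `(ε, s)`, continuous at `(0, 1/2)`, and
`s → 1/2` is the second-order Taylor expansion of `exp`. Finally `ζ(-1) = -B₂/2 = -1/12`.
-/

open Filter Topology Finset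
open scoped Nat

theorem Complex.tendsto_exp_sub_sum_range_div_pow (n : ℕ) :
    Tendsto (fun x : ℂ ↦ (exp x - ∑ i ∈ range n, x ^ i / i !) / x ^ n) (𝓝[≠] 0)
      (𝓝 (n ! : ℂ)⁻¹) := by
  have hrem : Tendsto
      (fun x : ℂ ↦ (n ! : ℂ)⁻¹ + (exp x - ∑ i ∈ range (n + 1), x ^ i / i !) / x ^ n)
      (𝓝[≠] 0) (𝓝 ((n ! : ℂ)⁻¹ + 0)) :=
    ((exp_sub_sum_range_succ_isLittleO_pow n).tendsto_div_nhds_zero.mono_left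
      nhdsWithin_le_nhds).const_add _
  rw [add_zero] at hrem
  refine hrem.congr' (eventually_nhdsWithin_of_forall fun x (hx : x ≠ 0) ↦ ?_)
  rw [sum_range_succ]
  field_simp
  ring

def regularPart {K : Type*} [Field K] (ε s : K) : K :=
  let w := 1 + ε * s
  (4 * s ^ 2 + 2 * w * s * (w - 6) + w ^ 2 * (12 - 5 * w) + 4 * ε * w ^ 3) /
    (4 * w ^ 2 * (2 + ε * w))

theorem sub_principalPart_eq_regularPart {K : Type*} [Field K] [CharZero K] {ε s u : K}
    (hε : ε ≠ 0) (hw : 1 + ε * s ≠ 0) (hu : 1 + u ≠ 0) (hsu : u = 1 + ε * (1 + ε * s)) :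
    u ^ 3 / ((1 - u) * (1 - u ^ 2)) + u / (ε * (1 - u)) + 1 / (2 * ε ^ 2) - 1 / (4 * ε) =
      regularPart ε s := by
  have h1 : 1 - u = -(ε * (1 + ε * s)) := by rw [hsu]; ring
  have h2 : 1 - u ^ 2 = -(ε * (1 + ε * s)) * (1 + u) := by rw [← h1]; ring
  have h3 : 1 + u = 2 + ε * (1 + ε * s) := by rw [hsu]; ring
  rw [h2, h1, regularPart, ← h3]
  field_simp
  rw [hsu]
  ring

theorem riemannZeta_neg_one : riemannZeta (-1) = -1 / 12 := by
  rw [show (-1 : ℂ) = -(1 : ℕ) by norm_num, riemannZeta_neg_nat_eq_bernoulli']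
  norm_num [bernoulli'_two]

/-- The function `g(ε) = e^{3ε}/((1-e^ε)(1-e^{2ε})) + e^ε/(ε(1-e^ε))` (the regularized
double sum minus its subdivergence) satisfies
`lim_{ε→0, ε≠0} (g(ε) + 1/(2ε²) - 1/(4ε)) = 3/8`; equivalently the constant term of its
Laurent expansion at `ε = 0` is `-(3/2)ζ(-1) + ζ(0)² = 3/8`, the renormalized value of
`ζ(0,0)`. -/
theorem renormalized_zeta_zero_zero :
    Filter.Tendsto
      (fun ε : ℂ =>
        (Complex.exp (3 * ε) / ((1 - Complex.exp ε) * (1 - Complex.exp (2 * ε))) +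
          Complex.exp ε / (ε * (1 - Complex.exp ε)))
        + 1 / (2 * ε ^ 2) - 1 / (4 * ε))
      (nhdsWithin 0 {(0 : ℂ)}ᶜ) (nhds (3 / 8)) ∧
    -(3 / 2) * riemannZeta (-1) + riemannZeta 0 ^ 2 = 3 / 8 := by
  refine ⟨?_, by rw [riemannZeta_neg_one, riemannZeta_zero]; norm_num⟩
  set s : ℂ → ℂ := fun ε ↦ (Complex.exp ε - (1 + ε)) / ε ^ 2
  have hs : Tendsto s (𝓝[≠] 0) (𝓝 (1 / 2)) := by
    simpa [s, sum_range_succ] using Complex.tendsto_exp_sub_sum_range_div_pow 2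
  have hε : Tendsto (fun ε : ℂ ↦ ε) (𝓝[≠] 0) (𝓝 0) := nhdsWithin_le_nhds
  have hw : Tendsto (fun ε ↦ 1 + ε * s ε) (𝓝[≠] 0) (𝓝 1) := by
    simpa using (hε.mul hs).const_add 1
  have hu : Tendsto (fun ε ↦ 1 + Complex.exp ε) (𝓝[≠] 0) (𝓝 2) := by
    simpa [one_add_one_eq_two] using
      ((Complex.continuous_exp.tendsto 0).mono_left nhdsWithin_le_nhds).const_add (1 : ℂ)
  have hF : ContinuousAt (fun p : ℂ × ℂ ↦ regularPart p.1 p.2) (0, 1 / 2) := by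
    unfold regularPart
    fun_prop (disch := norm_num)
  refine ((hF.tendsto.comp (hε.prodMk_nhds hs)).congr' ?_).mono_right
    (le_of_eq (by norm_num [regularPart]))
  filter_upwards [self_mem_nhdsWithin, hw.eventually_ne one_ne_zero,
    hu.eventually_ne two_ne_zero] with ε (hε0 : ε ≠ 0) hw0 hu0
  have h2 : Complex.exp (2 * ε) = Complex.exp ε ^ 2 := by exact_mod_cast Complex.exp_nat_mul ε 2
  have h3 : Complex.exp (3 * ε) = Complex.exp ε ^ 3 := by exact_mod_cast Complex.exp_nat_mul ε 3
  have hexp : Complex.exp ε = 1 + ε * (1 + ε * s ε) := by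
    simp only [s]
    field_simp
    ring
  rw [h2, h3, sub_principalPart_eq_regularPart hε0 hw0 hu0 hexp]
  rfl
end
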